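/- arXiv:2207.08937 — 3 statements merged into one kernel-verified Lean document; each statement's English description precedes it below -/
import Mathlib

section
/- If f: 2^Ω → ℝ is monotone and submodular, and S* is an optimal solution of size k maximizing f over k-subsets, then for the greedily-built set G_k (adding at each step the element of maximum marginal gain), f(G_k) ≥ (1 - (1 - 1/k)^k) f(S*) ≥ (1 - 1/e) f(S*), assuming f(∅) = 0. -/
/-- The Nemhauser–Wolsey–Fisher greedy guarantee: for a monotone submodular `f`
with `f(∅) = 0`, the greedily built set `G_k` satisfies
`f(G_k) ≥ (1 - (1 - 1/k)^k) f(S*) ≥ (1 - 1/e) f(S*)`. -/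
theorem greedy_approximation_guarantee {Ω : Type*} [DecidableEq Ω] [Fintype Ω]
    (f : Finset Ω → ℝ) (k : ℕ) (hk : 1 ≤ k)
    (hmono : ∀ S T : Finset Ω, S ⊆ T → f S ≤ f T)
    (hsub : ∀ S T : Finset Ω, S ⊆ T → ∀ v ∉ T,
      f (insert v S) - f S ≥ f (insert v T) - f T)
    (hempty : f ∅ = 0)
    (G : ℕ → Finset Ω) (hG0 : G 0 = ∅)
    (hstep : ∀ j < k, ∃ v ∉ G j, G (j + 1) = insert v (G j) ∧
      ∀ w : Ω, f (insert w (G j)) - f (G j) ≤ f (insert v (G j)) - f (G j))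
    (Sopt : Finset Ω) (hcard : Sopt.card = k)
    (hopt : ∀ T : Finset Ω, T.card = k → f T ≤ f Sopt) :
    f (G k) ≥ (1 - (1 - 1 / (k : ℝ)) ^ k) * f Sopt ∧
    (1 - (1 - 1 / (k : ℝ)) ^ k) * f Sopt ≥ (1 - 1 / Real.exp 1) * f Sopt := by
  have hk0 : (0:ℝ) < (k:ℝ) := by exact_mod_cast hk
  have hkne : (k:ℝ) ≠ 0 := ne_of_gt hk0
  have hc0 : (0:ℝ) ≤ 1 - 1/(k:ℝ) := by
    have : 1/(k:ℝ) ≤ 1 := by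
      rw [div_le_one hk0]; exact_mod_cast hk
    linarith
  have hfS : 0 ≤ f Sopt := by
    have := hmono ∅ Sopt (Finset.empty_subset _)
    linarith [hempty ▸ this]
  -- telescoping lemma
  have hsum : ∀ (T A : Finset Ω), f (A ∪ T) - f A ≤ ∑ v ∈ T, (f (insert v A) - f A) := by
    intro T A
    induction T using Finset.induction_on with
    | empty => simp
    | @insert a T' ha ih =>
      have hins : A ∪ insert a T' = insert a (A ∪ T') := by
        ext x; simp [or_comm, or_assoc, or_left_comm]
      have h1 : f (insert a (A ∪ T')) - f (A ∪ T') ≤ f (insert a A) - f A := by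
        by_cases hm : a ∈ A ∪ T'
        · rw [Finset.insert_eq_self.2 hm]
          have := hmono A (insert a A) (Finset.subset_insert _ _)
          linarith
        · exact hsub A (A ∪ T') Finset.subset_union_left a hm
      rw [hins, Finset.sum_insert ha]
      linarith
  -- per-step inequality
  have hstep' : ∀ j < k, f Sopt - f (G j) ≤ (k:ℝ) * (f (G (j+1)) - f (G j)) := by
    intro j hj
    obtain ⟨v, hv, hG1, hmax⟩ := hstep j hj
    have h1 : f Sopt ≤ f (G j ∪ Sopt) := hmono _ _ Finset.subset_union_right
    have h2 := hsum Sopt (G j)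
    have h3 : ∑ w ∈ Sopt, (f (insert w (G j)) - f (G j)) ≤
        (Sopt.card : ℝ) * (f (insert v (G j)) - f (G j)) := by
      have := Finset.sum_le_card_nsmul Sopt (fun w => f (insert w (G j)) - f (G j))
        (f (insert v (G j)) - f (G j)) (fun w _ => hmax w)
      simpa [nsmul_eq_mul] using this
    rw [hcard] at h3
    rw [hG1]
    linarith
  -- induction: distance shrinks geometrically
  have hind : ∀ j, j ≤ k → f Sopt - f (G j) ≤ (1 - 1/(k:ℝ))^j * f Sopt := by
    intro j
    induction j with
    | zero => intro _; simp [hG0, hempty]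
    | succ n ih =>
      intro hn1
      have hn : n < k := hn1
      have ihn := ih (le_of_lt hn)
      have hs := hstep' n hn
      set a := f Sopt - f (G n) with ha
      set b := f Sopt - f (G (n+1)) with hb
      have hab : b ≤ (1 - 1/(k:ℝ)) * a := by
        have : (k:ℝ) * b ≤ ((k:ℝ) - 1) * a := by
          have : a ≤ (k:ℝ) * (a - b) := by
            have : f (G (n+1)) - f (G n) = a - b := by rw [ha, hb]; ring
            rw [← this]; exact hs
          nlinarith
        have h4 : (1 - 1/(k:ℝ)) * a = ((k:ℝ) - 1) * a / k := by
          field_simp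
        rw [h4, le_div_iff₀ hk0]
        linarith [this]
      calc b ≤ (1 - 1/(k:ℝ)) * a := hab
        _ ≤ (1 - 1/(k:ℝ)) * ((1 - 1/(k:ℝ))^n * f Sopt) :=
            mul_le_mul_of_nonneg_left ihn hc0
        _ = (1 - 1/(k:ℝ))^(n+1) * f Sopt := by ring
  have hmain := hind k le_rfl
  constructor
  · linarith
  · -- (1-1/k)^k ≤ 1/e
    have h1 : (1 - 1/(k:ℝ)) ≤ Real.exp (-(1/(k:ℝ))) := by
      have := Real.add_one_le_exp (-(1/(k:ℝ)))
      linarith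
    have h2 : (1 - 1/(k:ℝ))^k ≤ (Real.exp (-(1/(k:ℝ))))^k :=
      pow_le_pow_left₀ hc0 h1 k
    have h3 : (Real.exp (-(1/(k:ℝ))))^k = Real.exp (-1) := by
      rw [← Real.exp_nat_mul]
      congr 1
      field_simp
    have h4 : Real.exp (-1) = 1 / Real.exp 1 := by
      rw [Real.exp_neg]; simp
    have : (1 - 1/(k:ℝ))^k ≤ 1 / Real.exp 1 := by
      rw [← h4]; exact h2.trans_eq h3
    have h5 : (1:ℝ) - 1 / Real.exp 1 ≤ 1 - (1 - 1/(k:ℝ))^k := by linarith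
    exact mul_le_mul_of_nonneg_right h5 hfS
end

section
/- For a monotone submodular f with f(∅) = 0, and any set T of size k, the maximum singleton marginal gain from a set S satisfies max_{v ∈ T \ S} [f(S ∪ {v}) - f(S)] ≥ (f(S ∪ T) - f(S)) / k. -/
lemma telescope_marginal {Ω : Type*} [DecidableEq Ω]
    (f : Finset Ω → ℝ)
    (hsub : ∀ S T : Finset Ω, S ⊆ T → ∀ v ∉ T,
      f (insert v S) - f S ≥ f (insert v T) - f T) :
    ∀ (A S : Finset Ω), f (S ∪ A) - f S ≤ ∑ v ∈ A \ S, (f (insert v S) - f S) := by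
  intro A
  induction A using Finset.induction_on with
  | empty => intro S; simp
  | @insert a A ha ih =>
    intro S
    by_cases haS : a ∈ S
    · have h1 : S ∪ insert a A = S ∪ A := by
        ext x; simp only [Finset.mem_union, Finset.mem_insert]
        constructor
        · rintro (h | rfl | h) <;> simp_all
        · tauto
      have h2 : insert a A \ S = A \ S := by
        ext x; simp only [Finset.mem_sdiff, Finset.mem_insert]
        constructor
        · rintro ⟨rfl | h, hx⟩ <;> simp_all
        · tauto
      rw [h1, h2]; exact ih S
    · have hA : a ∉ S ∪ A := by simp [ha, haS]
      have key : f (insert a S) - f S ≥ f (insert a (S ∪ A)) - f (S ∪ A) :=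
        hsub S (S ∪ A) Finset.subset_union_left a hA
      have h1 : S ∪ insert a A = insert a (S ∪ A) := Finset.union_insert a S A
      have h2 : insert a A \ S = insert a (A \ S) := by
        ext x; simp only [Finset.mem_sdiff, Finset.mem_insert]
        constructor
        · rintro ⟨rfl | h, hx⟩
          exacts [Or.inl rfl, Or.inr ⟨h, hx⟩]
        · rintro (rfl | ⟨h, hx⟩)
          exacts [⟨Or.inl rfl, haS⟩, ⟨Or.inr h, hx⟩]
      rw [h1, h2, Finset.sum_insert (by simp [ha])]
      have := ih S
      linarith

/-- For a monotone submodular `f` with `f(∅) = 0` and any set `T` of size `k`,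
the maximum singleton marginal gain over `T \ S` is at least
`(f(S ∪ T) - f(S)) / k`. -/
theorem exists_large_singleton_marginal {Ω : Type*} [DecidableEq Ω] [Fintype Ω]
    (f : Finset Ω → ℝ) (k : ℕ) (hk : 1 ≤ k)
    (hmono : ∀ S T : Finset Ω, S ⊆ T → f S ≤ f T)
    (hsub : ∀ S T : Finset Ω, S ⊆ T → ∀ v ∉ T,
      f (insert v S) - f S ≥ f (insert v T) - f T)
    (hempty : f ∅ = 0)
    (S T : Finset Ω) (hT : T.card = k) (hne : (T \ S).Nonempty) :
    ∃ v ∈ T \ S, (f (S ∪ T) - f S) / (k : ℝ) ≤ f (insert v S) - f S := by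
  obtain ⟨v, hv, hmax⟩ := Finset.exists_max_image (T \ S) (fun u => f (insert u S) - f S) hne
  refine ⟨v, hv, ?_⟩
  have hsum := telescope_marginal f hsub T S
  have hbound : ∑ u ∈ T \ S, (f (insert u S) - f S) ≤
      (T \ S).card • (f (insert v S) - f S) :=
    Finset.sum_le_card_nsmul _ _ _ (fun u hu => hmax u hu)
  have hnonneg : 0 ≤ f (insert v S) - f S := by
    have := hmono S (insert v S) (Finset.subset_insert v S)
    linarith
  have hcard : ((T \ S).card : ℝ) ≤ (k : ℝ) := by
    exact_mod_cast hT ▸ Finset.card_le_card (Finset.sdiff_subset)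
  have hk' : (0 : ℝ) < k := by exact_mod_cast hk
  rw [div_le_iff₀ hk']
  have : ((T \ S).card : ℝ) * (f (insert v S) - f S) ≤ k * (f (insert v S) - f S) :=
    mul_le_mul_of_nonneg_right hcard hnonneg
  simp only [nsmul_eq_mul] at hbound
  linarith
end

section
/- In the independent cascade model, the influence function σ(S) defined as the expected number of eventually active nodes starting from seed set S can be written via the live-edge (coupling) representation: σ(S) = Σ_g P(g) · |R_g(S)|, where the sum is over deterministic subgraphs g sampled by independently including each edge (v,w) with probability p_{v,w}, and R_g(S) is the set of nodes reachable from S in g. Consequently, σ is monotone non-decreasing and submodular, since for each fixed g the function S ↦ |R_g(S)| is monotone and submodular, and σ is a convex combination of these. -/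
/-- Live-edge representation of independent-cascade influence: if
`σ(S) = Σ_g P(g) · |R_g(S)|` where `P` is a probability distribution over
deterministic subgraphs and `R_g(S)` is the set of nodes reachable from `S` in
`g`, then each `S ↦ |R_g(S)|` is monotone and submodular, and consequently `σ`
is monotone non-decreasing and submodular. -/
theorem live_edge_influence_monotone_submodular {V : Type*} [DecidableEq V] [Fintype V]
    {G : Type*} [Fintype G]
    (P : G → ℝ) (hP0 : ∀ g, 0 ≤ P g) (hP1 : (∑ g, P g) = 1)
    (Edge : G → V → V → Prop)
    (R : G → Finset V → Finset V)
    (hR : ∀ g S w, w ∈ R g S ↔ ∃ v ∈ S, Relation.ReflTransGen (Edge g) v w)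
    (σ : Finset V → ℝ)
    (hσ : ∀ S, σ S = ∑ g, P g * ((R g S).card : ℝ)) :
    (∀ g, ∀ S T : Finset V, S ⊆ T → ((R g S).card : ℝ) ≤ (R g T).card) ∧
    (∀ g, ∀ S T : Finset V, S ⊆ T → ∀ v ∉ T,
      ((R g (insert v S)).card : ℝ) - (R g S).card ≥
        ((R g (insert v T)).card : ℝ) - (R g T).card) ∧
    (∀ S T : Finset V, S ⊆ T → σ S ≤ σ T) ∧
    (∀ S T : Finset V, S ⊆ T → ∀ v ∉ T,
      σ (insert v S) - σ S ≥ σ (insert v T) - σ T) := by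
  have hmono : ∀ g (S T : Finset V), S ⊆ T → R g S ⊆ R g T := by
    intro g S T hST w hw
    rw [hR] at hw ⊢
    obtain ⟨v, hv, h⟩ := hw
    exact ⟨v, hST hv, h⟩
  have hunion : ∀ g v (S : Finset V), R g (insert v S) = R g {v} ∪ R g S := by
    intro g v S
    ext w
    simp only [hR, Finset.mem_insert, Finset.mem_union, Finset.mem_singleton]
    constructor
    · rintro ⟨u, (rfl | hu), h⟩
      · exact Or.inl ⟨u, rfl, h⟩
      · exact Or.inr ⟨u, hu, h⟩
    · rintro (⟨u, rfl, h⟩ | ⟨u, hu, h⟩)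
      · exact ⟨u, Or.inl rfl, h⟩
      · exact ⟨u, Or.inr hu, h⟩
  have hdiff : ∀ g v (S : Finset V),
      ((R g (insert v S)).card : ℝ) - (R g S).card = ((R g {v} \ R g S).card : ℝ) := by
    intro g v S
    rw [hunion]
    have := Finset.card_sdiff_add_card (R g {v}) (R g S)
    have : ((R g {v} ∪ R g S).card : ℝ) = ((R g {v} \ R g S).card : ℝ) + (R g S).card := by
      exact_mod_cast this.symm
    rw [this]; ring
  have hcmono : ∀ g (S T : Finset V), S ⊆ T → ((R g S).card : ℝ) ≤ (R g T).card := by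
    intro g S T hST
    exact_mod_cast Finset.card_le_card (hmono g S T hST)
  have hcsub : ∀ g (S T : Finset V), S ⊆ T → ∀ v, v ∉ T →
      ((R g (insert v S)).card : ℝ) - (R g S).card ≥
        ((R g (insert v T)).card : ℝ) - (R g T).card := by
    intro g S T hST v _
    rw [hdiff, hdiff]
    have : R g {v} \ R g T ⊆ R g {v} \ R g S :=
      Finset.sdiff_subset_sdiff (le_refl _) (hmono g S T hST)
    exact_mod_cast Finset.card_le_card this
  refine ⟨hcmono, hcsub, ?_, ?_⟩
  · intro S T hST
    rw [hσ, hσ]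
    exact Finset.sum_le_sum fun g _ =>
      mul_le_mul_of_nonneg_left (hcmono g S T hST) (hP0 g)
  · intro S T hST v hv
    rw [hσ, hσ, hσ, hσ, ← Finset.sum_sub_distrib, ← Finset.sum_sub_distrib]
    refine Finset.sum_le_sum fun g _ => ?_
    rw [← mul_sub, ← mul_sub]
    exact mul_le_mul_of_nonneg_left (hcsub g S T hST v hv) (hP0 g)
end
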